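/- Let u be a standard Gaussian random vector in ℝ^d, let c ≥ 0, and let δ : ℝ^d → ℝ be a measurable function satisfying |δ(x)| ≤ c·‖x‖² for all x ∈ ℝ^d. Then the vector E[δ(u)·u] satisfies ‖E[δ(u)·u]‖ ≤ c·(d + 3)^{3/2}. -/

import Mathlib

open MeasureTheory ProbabilityTheory
open scoped RealInnerProductSpace

/-- The standard Gaussian measure on `EuclideanSpace ℝ (Fin d)`: the product of `d`
copies of the one-dimensional Gaussian `N(0,1)`. -/
noncomputable def stdGaussian (d : ℕ) : Measure (EuclideanSpace ℝ (Fin d)) :=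
  Measure.map (MeasurableEquiv.toLp 2 (Fin d → ℝ))
    (Measure.pi fun _ : Fin d => gaussianReal 0 1)

/-!
Since `|δ x| * ‖x‖ ≤ c * ‖x‖ ^ 3`, it suffices to bound `E ‖u‖³`. The pointwise inequality
`2 s r³ ≤ s² r² + r⁴` with `s = √(d + 3)` reduces this to the moments `E ‖u‖² = d` and
`E ‖u‖⁴ = d² + 2 d`. The latter is `Var ‖u‖² + (E ‖u‖²)²`, where `Var ‖u‖² = 2 d` because the
coordinates are independent and `Var (g²) = E g⁴ - 1 = 2` for `g ~ N(0, 1)`; the Gaussian fourth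
moment `3 v²` is the fourth derivative at `0` of the moment generating function `exp (v t² / 2)`.
-/

open Real
open scoped NNReal

lemma iteratedDeriv_four_exp_mul_sq_div_two_zero (v : ℝ) :
    iteratedDeriv 4 (fun t => rexp (v * t ^ 2 / 2)) 0 = 3 * v ^ 2 := by
  set g : ℝ → ℝ := fun t => rexp (v * t ^ 2 / 2)
  have hg t : HasDerivAt g (v * t * g t) t := by
    convert ((hasDerivAt_pow 2 t).const_mul v |>.div_const 2).exp using 1
    simp [g]; ring
  have deriv_mul_g (p p' q : ℝ → ℝ) (hp : ∀ t, HasDerivAt p (p' t) t)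
      (hq : ∀ t, p' t + v * t * p t = q t) :
      deriv (fun t => p t * g t) = fun t => q t * g t := by
    ext t
    rw [((hp t).fun_mul (hg t)).deriv, ← hq]
    ring
  have h1 : deriv g = fun t => (v * t) * g t := funext fun t => (hg t).deriv
  have h2 := deriv_mul_g (fun t => v * t) _ (fun t => v + v ^ 2 * t ^ 2)
    (fun t => (hasDerivAt_id t).const_mul v) (fun t => by ring)
  have h3 := deriv_mul_g (fun t => v + v ^ 2 * t ^ 2) _ (fun t => 3 * v ^ 2 * t + v ^ 3 * t ^ 3)
    (fun t => ((hasDerivAt_pow 2 t).const_mul (v ^ 2)).const_add v) (fun t => by simp; ring)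
  have h4 := deriv_mul_g (fun t => 3 * v ^ 2 * t + v ^ 3 * t ^ 3) _
    (fun t => 3 * v ^ 2 + 6 * v ^ 3 * t ^ 2 + v ^ 4 * t ^ 4)
    (fun t => ((hasDerivAt_id t).const_mul (3 * v ^ 2)).add
      ((hasDerivAt_pow 3 t).const_mul (v ^ 3)))
    (fun t => by simp; ring)
  rw [iteratedDeriv_succ', iteratedDeriv_succ', iteratedDeriv_succ', iteratedDeriv_one,
    h1, h2, h3, h4]
  simp [g]

section Gaussian

variable {v : ℝ≥0}

lemma integrable_pow_gaussianReal (μ : ℝ) (n : ℕ) :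
    Integrable (fun x => x ^ n) (gaussianReal μ v) :=
  (integrable_norm_iff (by fun_prop)).1 <| by
    simpa [norm_pow] using (memLp_id_gaussianReal (μ := μ) (v := v) n).integrable_norm_pow'

lemma integral_sq_gaussianReal : ∫ x, x ^ 2 ∂gaussianReal 0 v = v := by
  rw [← variance_of_integral_eq_zero aemeasurable_id' integral_id_gaussianReal,
    variance_fun_id_gaussianReal]

lemma integral_pow_four_gaussianReal : ∫ x, x ^ 4 ∂gaussianReal 0 v = 3 * v ^ 2 := by
  have hmgf : mgf id (gaussianReal 0 v) = fun t => rexp (v * t ^ 2 / 2) := by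
    ext t
    simpa using mgf_gaussianReal (μ := 0) (v := v) Measure.map_id t
  have hmoment := iteratedDeriv_mgf_zero (X := id) (μ := gaussianReal 0 v)
    (by simp [integrableExpSet_id_gaussianReal]) 4
  rw [hmgf, iteratedDeriv_four_exp_mul_sq_div_two_zero] at hmoment
  simpa using hmoment.symm

lemma memLp_two_sq_gaussianReal (μ : ℝ) : MemLp (fun x => x ^ 2) 2 (gaussianReal μ v) :=
  (memLp_two_iff_integrable_sq (by fun_prop)).2 <| by
    simpa [← pow_mul] using integrable_pow_gaussianReal (v := v) μ 4

lemma variance_sq_gaussianReal : Var[fun x => x ^ 2; gaussianReal 0 v] = 2 * v ^ 2 := by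
  rw [variance_eq_sub (memLp_two_sq_gaussianReal 0)]
  simp only [Pi.pow_apply, ← pow_mul]
  rw [integral_pow_four_gaussianReal, integral_sq_gaussianReal]
  ring

section Pi

variable {ι : Type*} [Fintype ι]

local notation "γ" => Measure.pi fun _ : ι => gaussianReal 0 v

lemma integral_sum_sq_pi_gaussianReal : ∫ y, ∑ i, y i ^ 2 ∂γ = Fintype.card ι * v := by
  rw [integral_finsetSum (f := fun i (y : ι → ℝ) => y i ^ 2) _
    fun i _ => (measurePreserving_eval _ i).integrable_comp_of_integrable
      (g := fun x : ℝ => x ^ 2) (integrable_pow_gaussianReal 0 2)]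
  simp [integral_comp_eval (X := fun _ : ι => ℝ) (f := fun x : ℝ => x ^ 2) (by fun_prop),
    integral_sq_gaussianReal]

lemma variance_sum_sq_pi_gaussianReal :
    Var[fun y => ∑ i, y i ^ 2; γ] = Fintype.card ι * (2 * v ^ 2) := by
  have hsum := variance_sum_pi (μ := fun _ : ι => gaussianReal 0 v) (X := fun _ x => x ^ 2)
    fun _ => memLp_two_sq_gaussianReal 0
  simp_all [Finset.sum_fn, variance_sq_gaussianReal]

lemma integral_sum_sq_sq_pi_gaussianReal :
    ∫ y, (∑ i, y i ^ 2) ^ 2 ∂γ = (Fintype.card ι * v) ^ 2 + Fintype.card ι * (2 * v ^ 2) := by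
  have hmem : MemLp (fun y => ∑ i, y i ^ 2) 2 γ :=
    memLp_finsetSum (f := fun i (y : ι → ℝ) => y i ^ 2) _ fun i _ =>
      (memLp_two_sq_gaussianReal 0).comp_measurePreserving (measurePreserving_eval _ i)
  have hvar := variance_eq_sub hmem
  rw [variance_sum_sq_pi_gaussianReal, integral_sum_sq_pi_gaussianReal] at hvar
  simp only [Pi.pow_apply] at hvar
  linarith

end Pi

end Gaussian

lemma integral_pow_three_le_rpow {α : Type*} [MeasurableSpace α] {μ : Measure α} {f : α → ℝ}
    (h2 : Integrable (fun x => f x ^ 2) μ) (h4 : Integrable (fun x => f x ^ 4) μ) {t : ℝ}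
    (ht : 0 < t) (hm2 : ∫ x, f x ^ 2 ∂μ ≤ t) (hm4 : ∫ x, f x ^ 4 ∂μ ≤ t ^ 2) :
    ∫ x, f x ^ 3 ∂μ ≤ t ^ ((3 : ℝ) / 2) := by
  set s := √t
  have hs : 0 < s := sqrt_pos.2 ht
  have hst : s ^ 2 = t := sq_sqrt ht.le
  have ht32 : t ^ ((3 : ℝ) / 2) = t * s := by
    rw [show (3 : ℝ) / 2 = 1 + 1 / 2 by norm_num, rpow_add ht, rpow_one, ← sqrt_eq_rpow]
  have hpt x : f x ^ 3 ≤ (t * f x ^ 2 + f x ^ 4) / (2 * s) := by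
    rw [le_div_iff₀ (by positivity), ← hst]
    nlinarith [sq_nonneg (f x * (f x - s))]
  by_cases h3 : Integrable (fun x => f x ^ 3) μ
  · calc ∫ x, f x ^ 3 ∂μ ≤ ∫ x, (t * f x ^ 2 + f x ^ 4) / (2 * s) ∂μ :=
          integral_mono h3 (((h2.const_mul t).add h4).div_const _) hpt
      _ = (t * ∫ x, f x ^ 2 ∂μ + ∫ x, f x ^ 4 ∂μ) / (2 * s) := by
          rw [integral_div, integral_add (h2.const_mul t) h4, integral_const_mul]
      _ ≤ (t * t + t ^ 2) / (2 * s) := by gcongr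
      _ = t ^ ((3 : ℝ) / 2) := by
          rw [ht32, ← hst]
          field_simp
          ring
  · rw [integral_undef h3]
    positivity

section StdGaussian

variable {d : ℕ}

lemma stdGaussian_eq_stdGaussian_euclideanSpace :
    stdGaussian d = ProbabilityTheory.stdGaussian (EuclideanSpace ℝ (Fin d)) :=
  map_pi_eq_stdGaussian

instance : IsProbabilityMeasure (stdGaussian d) := by
  rw [stdGaussian_eq_stdGaussian_euclideanSpace]
  infer_instance

lemma integrable_norm_pow_stdGaussian (n : ℕ) :
    Integrable (fun x => ‖x‖ ^ n) (stdGaussian d) := by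
  rw [stdGaussian_eq_stdGaussian_euclideanSpace]
  exact (IsGaussian.memLp_id _ n (by simp)).integrable_norm_pow'

lemma integral_norm_sq_stdGaussian : ∫ x, ‖x‖ ^ 2 ∂stdGaussian d = d := by
  rw [_root_.stdGaussian, integral_map_equiv]
  simp only [MeasurableEquiv.toLp_apply, EuclideanSpace.real_norm_sq_eq]
  simpa using integral_sum_sq_pi_gaussianReal (ι := Fin d) (v := 1)

lemma integral_norm_pow_four_stdGaussian :
    ∫ x, ‖x‖ ^ 4 ∂stdGaussian d = (d : ℝ) ^ 2 + 2 * d := by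
  rw [_root_.stdGaussian, integral_map_equiv]
  simp only [MeasurableEquiv.toLp_apply, show 4 = 2 * 2 from rfl, pow_mul,
    EuclideanSpace.real_norm_sq_eq]
  simpa [mul_comm] using integral_sum_sq_sq_pi_gaussianReal (ι := Fin d) (v := 1)

lemma integral_norm_pow_three_stdGaussian_le :
    ∫ x, ‖x‖ ^ 3 ∂stdGaussian d ≤ ((d : ℝ) + 3) ^ ((3 : ℝ) / 2) :=
  integral_pow_three_le_rpow (integrable_norm_pow_stdGaussian 2)
    (integrable_norm_pow_stdGaussian 4) (by positivity)
    (by rw [integral_norm_sq_stdGaussian]; linarith)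
    (by rw [integral_norm_pow_four_stdGaussian]; nlinarith)

end StdGaussian

theorem stmt13_general {d : ℕ}
    {Ω : Type*} [MeasureSpace Ω]
    (u : Ω → EuclideanSpace ℝ (Fin d))
    (hlaw : Measure.map u ℙ = stdGaussian d)
    (c : ℝ) (hc : 0 ≤ c)
    (δ : EuclideanSpace ℝ (Fin d) → ℝ)
    (hδ : ∀ x, |δ x| ≤ c * ‖x‖ ^ 2) :
    ‖∫ ω, δ (u ω) • u ω ∂ℙ‖ ≤ c * ((d : ℝ) + 3) ^ ((3 : ℝ) / 2) := by
  have hu : AEMeasurable u ℙ := aemeasurable_of_map_neZero <| by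
    rw [hlaw]
    infer_instance
  have hint : Integrable (fun ω => c * ‖u ω‖ ^ 3) ℙ := by
    refine .const_mul ((integrable_map_measure (g := fun x => ‖x‖ ^ 3) (by fun_prop) hu).1 ?_) c
    rw [hlaw]
    exact integrable_norm_pow_stdGaussian 3
  have hbound ω : ‖δ (u ω) • u ω‖ ≤ c * ‖u ω‖ ^ 3 := by
    rw [norm_smul, Real.norm_eq_abs]
    calc |δ (u ω)| * ‖u ω‖ ≤ c * ‖u ω‖ ^ 2 * ‖u ω‖ := by gcongr; exact hδ _
      _ = c * ‖u ω‖ ^ 3 := by ring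
  calc ‖∫ ω, δ (u ω) • u ω ∂ℙ‖ ≤ ∫ ω, c * ‖u ω‖ ^ 3 ∂ℙ :=
        norm_integral_le_of_norm_le hint (.of_forall hbound)
    _ = c * ∫ x, ‖x‖ ^ 3 ∂stdGaussian d := by
        rw [integral_const_mul, ← hlaw, integral_map hu (by fun_prop)]
    _ ≤ c * ((d : ℝ) + 3) ^ ((3 : ℝ) / 2) := by
        gcongr
        exact integral_norm_pow_three_stdGaussian_le

/-- Let `u` be a standard Gaussian random vector in `ℝ^d`, let `c ≥ 0`, and let `δ : ℝ^d → ℝ`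
be measurable with `|δ(x)| ≤ c‖x‖²` for all `x`. Then `‖E[δ(u)·u]‖ ≤ c·(d + 3)^{3/2}`. -/
theorem stmt13 {d : ℕ} (hd : 0 < d)
    {Ω : Type*} [MeasureSpace Ω] [IsProbabilityMeasure (ℙ : Measure Ω)]
    (u : Ω → EuclideanSpace ℝ (Fin d)) (hu : Measurable u)
    (hlaw : Measure.map u ℙ = stdGaussian d)
    (c : ℝ) (hc : 0 ≤ c)
    (δ : EuclideanSpace ℝ (Fin d) → ℝ) (hδmeas : Measurable δ)
    (hδ : ∀ x, |δ x| ≤ c * ‖x‖ ^ 2) :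
    ‖∫ ω, δ (u ω) • u ω ∂ℙ‖ ≤ c * ((d : ℝ) + 3) ^ ((3 : ℝ) / 2) :=
  stmt13_general u hlaw c hc δ hδ
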